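/- arXiv:2311.05566 — 2 statements merged into one kernel-verified Lean document; each statement's English description precedes it below -/
import Mathlib

section
/- Let f and g be {0,1}-valued perfect 2-colorings of Q_{n−2} with quotient matrices ((n−2−b, b),(b, n−2−b)) and ((n−2−c, c),(c, n−2−c)) respectively. Define h on Qₙ by: h(x, 0, 0) = f(x), h(x, 1, 1) = 1 − f(x), h(x, 0, 1) = 2 + g(x), h(x, 1, 0) = 3 − g(x), where x ∈ Z₂^{n−2} and the last two coordinates are indicated. Then h is a perfect 4-coloring of Qₙ with quotient matrix T = [[n−2−b, b, 1, 1],[b, n−2−b, 1, 1],[1, 1, n−2−c, c],[1, 1, c, n−2−c]], and T has eigenvalues n, n−4, n−2(b+1), n−2(c+1). -/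
/-!
Write a vertex of `Q (m + 2)` as `(x, s, t)` with `x ∈ Q m`. On the block `s = t` the colour of
`(x, s, t)` is `f x` relabelled by `s`, on the block `s ≠ t` it is `g x` relabelled by `s`. The `m`
neighbours `(x', s, t)` stay in the block and are counted by the perfectness of `f` (resp. `g`),
while the two neighbours `(x, s + 1, t)` and `(x, s, t + 1)` lie in the other block and take each of
its two colours exactly once. The quotient matrix has the eigenvectors `(1, 1, 1, 1)`,
`(1, 1, -1, -1)`, `(1, -1, 0, 0)` and `(0, 0, 1, -1)`.
-/

open Finset

/-- The hypercube graph `Q n` on binary words of length `n`. -/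
def cubeGraph (n : ℕ) : SimpleGraph (Fin n → ZMod 2) where
  Adj x y := hammingDist x y = 1
  symm := ⟨by intro x y h; rwa [hammingDist_comm]⟩
  loopless := ⟨by intro x h; simp [hammingDist_self] at h⟩

instance (n : ℕ) : DecidableRel (cubeGraph n).Adj := fun _ _ => Nat.decEq _ _

/-- `f` is a perfect coloring of `G` with quotient matrix `S`. -/
def IsPerfectColoring {V K : Type*} [Fintype V] [DecidableEq K]
    (G : SimpleGraph V) [DecidableRel G.Adj] (f : V → K) (S : K → K → ℕ) : Prop :=
  ∀ v j, ((G.neighborFinset v).filter (fun w => f w = j)).card = S (f v) j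

lemma hammingNorm_eq_one_iff_exists_single {ι : Type*} [Fintype ι] [DecidableEq ι]
    {d : ι → ZMod 2} : hammingNorm d = 1 ↔ ∃ i, d = Pi.single i 1 := by
  refine ⟨fun h => ?_, ?_⟩
  · obtain ⟨i, hi⟩ := card_eq_one.mp h
    have hsupp (j) : d j ≠ 0 ↔ j = i := by simpa using congrArg (j ∈ ·) hi
    refine ⟨i, funext fun j => ?_⟩
    obtain rfl | hji := eq_or_ne j i
    · have : ∀ a : ZMod 2, a ≠ 0 → a = 1 := by decide
      simpa using this _ ((hsupp j).mpr rfl)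
    · simpa [hji] using mt (hsupp j).mp hji
  · rintro ⟨i, rfl⟩
    rw [hammingNorm, card_eq_one]
    exact ⟨i, by ext j; by_cases j = i <;> simp_all⟩

namespace Fin

variable {n : ℕ} {M : Type*} [AddZeroClass M]

lemma init_add_single_castSucc (v : Fin (n + 1) → M) (i : Fin n) (a : M) :
    init (v + Pi.single i.castSucc a) = init v + Pi.single i a := by
  ext j
  simp [init, Pi.single_apply]

lemma init_add_single_last (v : Fin (n + 1) → M) (a : M) :
    init (v + Pi.single (last n) a) = init v := by
  ext j
  simp [init, castSucc_ne_last]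

end Fin

namespace cubeGraph

variable {n : ℕ}

lemma adj_iff {v w : Fin n → ZMod 2} : (cubeGraph n).Adj v w ↔ ∃ i, w = v + Pi.single i 1 := by
  change hammingDist v w = 1 ↔ _
  rw [hammingDist_eq_hammingNorm, hammingNorm_eq_one_iff_exists_single]
  exact exists_congr fun i => neg_add_eq_iff_eq_add

lemma neighborFinset_eq_image (v : Fin n → ZMod 2) :
    (cubeGraph n).neighborFinset v = univ.image fun i => v + Pi.single i 1 := by
  ext w
  simp [adj_iff, eq_comm]

lemma card_neighborFinset_filter (v : Fin n → ZMod 2) (p : (Fin n → ZMod 2) → Prop)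
    [DecidablePred p] :
    #{w ∈ (cubeGraph n).neighborFinset v | p w} = #{i | p (v + Pi.single i 1)} := by
  rw [neighborFinset_eq_image, filter_image, card_image_of_injective]
  intro i j hij
  simpa [Pi.single_apply] using congrFun (add_left_cancel hij) i

lemma degree_eq (v : Fin n → ZMod 2) : (cubeGraph n).degree v = n := by
  rw [← SimpleGraph.card_neighborFinset_eq_degree]
  simpa using card_neighborFinset_filter v fun _ => True

lemma card_neighborFinset_filter_add_two (v : Fin (n + 2) → ZMod 2)
    (p : (Fin (n + 2) → ZMod 2) → Prop) [DecidablePred p] :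
    #{w ∈ (cubeGraph (n + 2)).neighborFinset v | p w} =
      #{i : Fin n | p (v + Pi.single i.castSucc.castSucc 1)} +
        (if p (v + Pi.single (Fin.last n).castSucc 1) then 1 else 0) +
        (if p (v + Pi.single (Fin.last (n + 1)) 1) then 1 else 0) := by
  rw [card_neighborFinset_filter, card_filter, Fin.sum_univ_castSucc, Fin.sum_univ_castSucc,
    card_filter]

end cubeGraph

namespace IsPerfectColoring

variable {V K L : Type*} [Fintype V] [Fintype K] [DecidableEq K] [DecidableEq L]
  {G : SimpleGraph V} [DecidableRel G.Adj] {f : V → K} {S : K → K → ℕ}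

lemma card_filter_comp (hf : IsPerfectColoring G f S) (φ : K → L) (v : V) (j : L) :
    #{w ∈ G.neighborFinset v | φ (f w) = j} = ∑ k with φ k = j, S (f v) k := by
  rw [card_eq_sum_card_fiberwise (f := f) (t := {k | φ k = j}) fun w hw => by simp_all]
  refine sum_congr rfl fun k hk => ?_
  rw [← hf v k, filter_filter]
  congr 1
  ext w
  simp_all

lemma sum_eq_degree (hf : IsPerfectColoring G f S) (v : V) : ∑ k, S (f v) k = G.degree v := by
  simpa using (hf.card_filter_comp (fun _ => ()) v ()).symm

end IsPerfectColoring

lemma le_of_isPerfectColoring_cubeGraph {m b : ℕ} {f : (Fin m → ZMod 2) → Fin 2}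
    (hf : IsPerfectColoring (cubeGraph m) f (fun i j => if i = j then m - b else b)) : b ≤ m := by
  have hdeg := hf.sum_eq_degree 0
  rw [cubeGraph.degree_eq, Fin.sum_univ_two] at hdeg
  split_ifs at hdeg <;> omega

-- `h (x, s, t) = blockColor s t (f x) (g x)`
def blockColor (s t : ZMod 2) (a e : Fin 2) : Fin 4 :=
  if s = 0 then (if t = 0 then (if a = 0 then 0 else 1) else (if e = 0 then 2 else 3))
  else (if t = 0 then (if e = 0 then 3 else 2) else (if a = 0 then 1 else 0))

def quotientMatrix (m b c : ℕ) (i j : Fin 4) : ℕ :=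
  if i.val ≤ 1 then (if j.val ≤ 1 then (if i = j then m - b else b) else 1)
  else (if j.val ≤ 1 then 1 else (if i = j then m - c else c))

lemma blockColor_of_eq :
    ∀ (s : ZMod 2) (a e : Fin 2), blockColor s s a e = blockColor s s a 0 := by
  decide

lemma blockColor_of_ne :
    ∀ (s t : ZMod 2) (a e : Fin 2), s ≠ t → blockColor s t a e = blockColor s t 0 e := by
  decide

-- The first summand counts the neighbours `(x', s, t)`, the other two `(x, s + 1, t)` and
-- `(x, s, t + 1)`.
lemma quotientMatrix_blockColor (m b c : ℕ) (s t : ZMod 2) (a e : Fin 2) (j : Fin 4) :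
    (if s = t then ∑ k with blockColor s t k 0 = j, (if a = k then m - b else b)
      else ∑ k with blockColor s t 0 k = j, (if e = k then m - c else c)) +
      (if blockColor (s + 1) t a e = j then 1 else 0) +
      (if blockColor s (t + 1) a e = j then 1 else 0) =
    quotientMatrix m b c (blockColor s t a e) j := by
  have hZ2 : ∀ x : ZMod 2, x = 0 ∨ x = 1 := by decide
  simp only [sum_filter, Fin.sum_univ_two]
  rcases hZ2 s with rfl | rfl <;> rcases hZ2 t with rfl | rfl <;> fin_cases a <;> fin_cases e <;>
    fin_cases j <;> simp +decide [quotientMatrix]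

theorem isPerfectColoring_blockColor {m b c : ℕ} {f g : (Fin m → ZMod 2) → Fin 2}
    (hf : IsPerfectColoring (cubeGraph m) f (fun i j => if i = j then m - b else b))
    (hg : IsPerfectColoring (cubeGraph m) g (fun i j => if i = j then m - c else c)) :
    IsPerfectColoring (cubeGraph (m + 2))
      (fun v => blockColor (v (Fin.last m).castSucc) (v (Fin.last (m + 1)))
        (f (Fin.init (Fin.init v))) (g (Fin.init (Fin.init v))))
      (quotientMatrix m b c) := by
  intro v j
  set x := Fin.init (Fin.init v)
  set s := v (Fin.last m).castSucc
  set t := v (Fin.last (m + 1))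
  have hblock : #{u ∈ (cubeGraph m).neighborFinset x | blockColor s t (f u) (g u) = j} =
      if s = t then ∑ k with blockColor s t k 0 = j, (if f x = k then m - b else b)
      else ∑ k with blockColor s t 0 k = j, (if g x = k then m - c else c) := by
    split_ifs with hst
    · simp_rw [hst, blockColor_of_eq]
      exact hf.card_filter_comp (fun k => blockColor t t k 0) x j
    · simp_rw [blockColor_of_ne _ _ _ _ hst]
      exact hg.card_filter_comp (fun k => blockColor s t 0 k) x j
  rw [cubeGraph.card_neighborFinset_filter_add_two, ← quotientMatrix_blockColor, ← hblock,
    cubeGraph.card_neighborFinset_filter]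
  simp [Fin.init_add_single_castSucc, Fin.init_add_single_last, x, s, t, Fin.castSucc_ne_last]

lemma exists_mulVec_quotientMatrix_eq_smul {m b c : ℕ} (hb : b ≤ m) (hc : c ≤ m) (μ : ℝ)
    (hμ : μ = (m : ℝ) + 2 ∨ μ = (m : ℝ) + 2 - 4 ∨
      μ = (m : ℝ) + 2 - 2 * ((b : ℝ) + 1) ∨ μ = (m : ℝ) + 2 - 2 * ((c : ℝ) + 1)) :
    ∃ v : Fin 4 → ℝ, v ≠ 0 ∧
      (Matrix.of fun i j => (quotientMatrix m b c i j : ℝ)).mulVec v = μ • v := by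
  have hT : (Matrix.of fun i j => (quotientMatrix m b c i j : ℝ)) =
      !![(m : ℝ) - b, b, 1, 1; b, m - b, 1, 1; 1, 1, m - c, c; 1, 1, c, m - c] := by
    ext i j
    fin_cases i <;> fin_cases j <;> simp [quotientMatrix, hb, hc]
  have hv {v : Fin 4 → ℝ} (i : Fin 4) (hi : v i ≠ 0) : v ≠ 0 := fun h => hi (congrFun h i)
  rw [hT]
  rcases hμ with rfl | rfl | rfl | rfl
  · refine ⟨![1, 1, 1, 1], hv 0 one_ne_zero, ?_⟩
    ext i; fin_cases i <;> simp [Matrix.mulVec, dotProduct, Fin.sum_univ_four] <;> ring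
  · refine ⟨![1, 1, -1, -1], hv 0 one_ne_zero, ?_⟩
    ext i; fin_cases i <;> simp [Matrix.mulVec, dotProduct, Fin.sum_univ_four] <;> ring
  · refine ⟨![1, -1, 0, 0], hv 0 one_ne_zero, ?_⟩
    ext i; fin_cases i <;> simp [Matrix.mulVec, dotProduct, Fin.sum_univ_four] <;> ring
  · refine ⟨![0, 0, 1, -1], hv 2 one_ne_zero, ?_⟩
    ext i; fin_cases i <;> simp [Matrix.mulVec, dotProduct, Fin.sum_univ_four] <;> ring

/-- combining two perfect 2-colorings `f`, `g` of `Q_{n−2}` (with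
quotient matrices `((n−2−b,b),(b,n−2−b))` and `((n−2−c,c),(c,n−2−c))`) into a perfect
4-coloring `h` of `Qₙ` (here `n = m + 2`), whose quotient matrix has eigenvalues
`n`, `n−4`, `n−2(b+1)`, `n−2(c+1)`. -/
theorem stmt11 (m b c : ℕ) (f g : (Fin m → ZMod 2) → Fin 2)
    (hf : IsPerfectColoring (cubeGraph m) f (fun i j => if i = j then m - b else b))
    (hg : IsPerfectColoring (cubeGraph m) g (fun i j => if i = j then m - c else c)) :
    IsPerfectColoring (cubeGraph (m + 2))
        (fun x : Fin (m + 2) → ZMod 2 =>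
          let x' : Fin m → ZMod 2 := fun i => x (i.castSucc.castSucc)
          if x ⟨m, by omega⟩ = 0 then
            (if x ⟨m + 1, by omega⟩ = 0 then (if f x' = 0 then (0 : Fin 4) else 1)
             else (if g x' = 0 then 2 else 3))
          else
            (if x ⟨m + 1, by omega⟩ = 0 then (if g x' = 0 then 3 else 2)
             else (if f x' = 0 then 1 else 0)))
        (fun i j : Fin 4 =>
          if i.val ≤ 1 then (if j.val ≤ 1 then (if i = j then m - b else b) else 1)
          else (if j.val ≤ 1 then 1 else (if i = j then m - c else c))) ∧
      ∀ μ : ℝ,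
        (μ = (m : ℝ) + 2 ∨ μ = (m : ℝ) + 2 - 4 ∨
          μ = (m : ℝ) + 2 - 2 * ((b : ℝ) + 1) ∨ μ = (m : ℝ) + 2 - 2 * ((c : ℝ) + 1)) →
        ∃ v : Fin 4 → ℝ, v ≠ 0 ∧
          Matrix.mulVec
            (fun i j =>
              ((if i.val ≤ 1 then (if j.val ≤ 1 then (if i = j then m - b else b) else 1)
                else (if j.val ≤ 1 then 1 else (if i = j then m - c else c)) : ℕ) : ℝ)
              : Matrix (Fin 4) (Fin 4) ℝ) v = μ • v :=
  ⟨isPerfectColoring_blockColor hf hg,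
    exists_mulVec_quotientMatrix_eq_smul (le_of_isPerfectColoring_cubeGraph hf)
      (le_of_isPerfectColoring_cubeGraph hg)⟩
end

section
/- Define g : Z₂⁹ → Z₂² by g(x₀,…,x₈) = (x₀+x₁, x₀+x₂) ⋆ (x₃+x₄, x₃+x₅) + (x₆+x₇, x₆+x₈), where ⋆ is the group operation of the Klein four-group on Z₂² (componentwise addition) and + on the right is also componentwise addition in Z₂². Then the 2-coloring f of Q₉ that colors a vertex x with color 1 if g(x) = (0,0) and color 0 otherwise is a perfect 2-coloring with quotient matrix ((0, 9),(3, 6)). -/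
/-!
Flipping coordinate `i` shifts `g` by the fixed vector `g(eᵢ)`. Among `g(e₀), …, g(e₈)` the zero
vector never occurs and each of the three nonzero vectors of `Z₂²` occurs exactly three times.
Hence a vertex with `g(x) = 0` has all nine neighbours outside the first color class, and a
vertex with `g(x) = c ≠ 0` has exactly three neighbours inside it, namely those with `g(eᵢ) = c`.
-/

open Finset

theorem hammingNorm_eq_one_iff {ι : Type*} [Fintype ι] [DecidableEq ι] {β : ι → Type*}
    [∀ i, DecidableEq (β i)] [∀ i, Zero (β i)] {x : ∀ i, β i} :
    hammingNorm x = 1 ↔ ∃ i a, a ≠ 0 ∧ x = Pi.single i a := by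
  simp only [hammingNorm, card_eq_one, Finset.ext_iff, mem_filter, mem_univ, true_and,
    mem_singleton]
  constructor
  · rintro ⟨i, hi⟩
    refine ⟨i, x i, (hi i).2 rfl, funext fun j => ?_⟩
    rcases eq_or_ne j i with rfl | hj
    · simp
    · simpa [hj] using mt (hi j).1 hj
  · rintro ⟨i, a, ha, rfl⟩
    exact ⟨i, fun j => by rcases eq_or_ne j i with rfl | hj <;> simp [*]⟩

theorem cubeGraph_adj_iff {n : ℕ} {v w : Fin n → ZMod 2} :
    (cubeGraph n).Adj v w ↔ ∃ i, w = v + Pi.single i 1 := by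
  have hunit : ∀ a : ZMod 2, a ≠ 0 ↔ a = 1 := by decide
  change hammingDist v w = 1 ↔ _
  rw [hammingDist_eq_hammingNorm, hammingNorm_eq_one_iff]
  simp only [hunit, exists_eq_left, neg_add_eq_iff_eq_add]

theorem injective_add_single_one {n : ℕ} (v : Fin n → ZMod 2) :
    Function.Injective fun i => v + Pi.single i (1 : ZMod 2) := by
  intro i j hij
  by_contra hne
  simpa [Pi.single_apply, hne] using congrFun hij i

theorem cubeGraph_neighborFinset {n : ℕ} (v : Fin n → ZMod 2) :
    (cubeGraph n).neighborFinset v = univ.image fun i => v + Pi.single i 1 := by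
  ext w
  simp [cubeGraph_adj_iff, eq_comm]

theorem card_filter_neighborFinset_cubeGraph {n : ℕ} (v : Fin n → ZMod 2)
    (p : (Fin n → ZMod 2) → Prop) [DecidablePred p] :
    #{w ∈ (cubeGraph n).neighborFinset v | p w} = #{i | p (v + Pi.single i 1)} := by
  rw [cubeGraph_neighborFinset, filter_image,
    card_image_of_injective _ (injective_add_single_one v)]

theorem isPerfectColoring_cubeGraph_of_syndrome {n k : ℕ} {W : Type*} [AddCommGroup W]
    [DecidableEq W] (s : (Fin n → ZMod 2) →+ W)
    (hs : ∀ c, #{i | s (Pi.single i 1) = c} = if c = 0 then 0 else k) :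
    IsPerfectColoring (cubeGraph n) (fun x => if s x = 0 then (1 : Fin 2) else 0)
      (fun i j => if i = 1 then (if j = 1 then 0 else n) else (if j = 1 then k else n - k)) := by
  intro v j
  have hkernel : #{i | s (v + Pi.single i 1) = 0} = if s v = 0 then 0 else k := by
    simp only [map_add, add_eq_zero_iff_eq_neg', hs, neg_eq_zero]
  have hcompl : #{i | ¬s (v + Pi.single i 1) = 0} = n - #{i | s (v + Pi.single i 1) = 0} := by
    rw [filter_not, card_sdiff_of_subset (filter_subset _ _), card_univ, Fintype.card_fin]
  rw [card_filter_neighborFinset_cubeGraph]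
  by_cases hv : s v = 0 <;> fin_cases j <;> simp [-map_add, hv, hkernel, hcompl]

/-- The map `g` of the statement, with `⋆` written as `+`. -/
@[simps]
def kleinSyndrome : (Fin 9 → ZMod 2) →+ ZMod 2 × ZMod 2 where
  toFun x := (x 0 + x 1, x 0 + x 2) + (x 3 + x 4, x 3 + x 5) + (x 6 + x 7, x 6 + x 8)
  map_zero' := rfl
  map_add' x y := by ext <;> simp only [Pi.add_apply, Prod.mk_add_mk] <;> ring

theorem kleinSyndrome_eq_zero_iff (x : Fin 9 → ZMod 2) :
    kleinSyndrome x = 0 ↔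
      x 0 + x 1 + x 3 + x 4 = x 6 + x 7 ∧ x 0 + x 2 + x 3 + x 5 = x 6 + x 8 := by
  rw [kleinSyndrome_apply, Prod.mk_add_mk, Prod.mk_add_mk, Prod.mk_eq_zero,
    CharTwo.add_eq_zero, CharTwo.add_eq_zero, ← add_assoc, ← add_assoc]

theorem card_kleinSyndrome_single_eq (c : ZMod 2 × ZMod 2) :
    #{i | kleinSyndrome (Pi.single i 1) = c} = if c = 0 then 0 else 3 := by
  revert c
  decide

/-- the 2-coloring of `Q₉` whose first color class is the solution set of
`(x₀+x₁, x₀+x₂) ⋆ (x₃+x₄, x₃+x₅) = (x₆+x₇, x₆+x₈)` with `⋆` the Klein four-group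
operation (coordinatewise XOR) is a perfect 2-coloring with quotient matrix
`((0,9),(3,6))` (rows indexed by colors 1, 0). -/
theorem stmt18 :
    IsPerfectColoring (cubeGraph 9)
      (fun x : Fin 9 → ZMod 2 =>
        if x 0 + x 1 + x 3 + x 4 = x 6 + x 7 ∧ x 0 + x 2 + x 3 + x 5 = x 6 + x 8
        then (1 : Fin 2) else 0)
      (fun i j =>
        if i = 1 then (if j = 1 then 0 else 9) else (if j = 1 then 3 else 6)) := by
  simp only [← kleinSyndrome_eq_zero_iff]
  exact isPerfectColoring_cubeGraph_of_syndrome kleinSyndrome card_kleinSyndrome_single_eq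
end
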